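/- Let P be a probability measure on a measurable space 𝒳, let Γ be a convex set of probability measures on 𝒳, and let Q ∈ Γ satisfy D(Q‖P) < +∞. Then Q is an I-projection of P on Γ (i.e., D(Q‖P) ≤ D(R‖P) for all R ∈ Γ) if and only if every R ∈ Γ satisfies D(R‖P) ≥ D(R‖Q) + D(Q‖P). -/

import Mathlib

/-!
Write `q, r` for the densities of `Q, R` with respect to `P`. Since `Γ` is convex, the mixtures
`Qₜ = t R + (1 - t) Q` lie in `Γ` and have density `q + t (r - q)`, so minimality of `Q` says
that `t ↦ ∫ φ (q + t (r - q)) dP`, with `φ y = y log y`, is minimal at `t = 0`. The difference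
quotients of the convex integrand decrease as `t ↓ 0`, so by monotone convergence their limit
`(log q + 1) (r - q)` is integrable with nonnegative integral; in particular `r = 0` where
`q = 0` (there the quotients tend to `-∞`), i.e. `R ≪ Q`. As `∫ (r - q) dP = 0`, this says
`∫ log q dR ≥ ∫ log q dQ = D(Q‖P)`, and the chain rule `log (dR/dQ) = log r - log q` gives
`D(R‖P) = D(R‖Q) + ∫ log q dR ≥ D(R‖Q) + D(Q‖P)`.
-/

open MeasureTheory Filter Topology
open scoped ENNReal NNReal Classical

/-- Relative entropy `D(Q‖P)`: `∫ log (dQ/dP) dQ` if `Q ≪ P` (and the integral is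
well-defined), `+∞` otherwise. -/
noncomputable def relEnt {X : Type*} [MeasurableSpace X] (Q P : Measure X) : ℝ≥0∞ :=
  if Q ≪ P ∧ Integrable (llr Q P) Q then ENNReal.ofReal (∫ x, llr Q P x ∂Q) else ⊤

open Set Real AffineMap

section

variable {X : Type*} [MeasurableSpace X] {μ : Measure X}

theorem exists_tendsto_of_antitone_of_le_integral {f : ℕ → X → ℝ} {c : ℝ}
    (hf : ∀ n, Integrable (f n) μ) (hmono : ∀ x, Antitone fun n ↦ f n x)
    (hc : ∀ n, c ≤ ∫ x, f n x ∂μ) :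
    ∃ F : X → ℝ, Integrable F μ ∧ c ≤ ∫ x, F x ∂μ ∧
      ∀ᵐ x ∂μ, Tendsto (fun n ↦ f n x) atTop (𝓝 (F x)) := by
  set g : ℕ → X → ℝ≥0∞ := fun n x ↦ ENNReal.ofReal (f 0 x - f n x)
  have hg_mono : ∀ x, Monotone fun n ↦ g n x := fun x m n hmn ↦
    ENNReal.ofReal_le_ofReal (by linarith [hmono x hmn])
  have hg_meas : ∀ n, AEMeasurable (g n) μ := fun n ↦
    ((hf 0).sub (hf n)).aemeasurable.ennreal_ofReal
  have hg_lintegral : ∀ n, ∫⁻ x, g n x ∂μ ≤ ENNReal.ofReal (∫ x, f 0 x ∂μ - c) := fun n ↦ by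
    rw [← ofReal_integral_eq_lintegral_ofReal (f := fun x ↦ f 0 x - f n x) ((hf 0).sub (hf n))
      (ae_of_all _ fun x ↦ sub_nonneg.2 (hmono x (Nat.zero_le n))), integral_sub (hf 0) (hf n)]
    exact ENNReal.ofReal_le_ofReal (by linarith [hc n])
  set G : X → ℝ≥0∞ := fun x ↦ ⨆ n, g n x
  have hG_meas : AEMeasurable G μ := AEMeasurable.iSup hg_meas
  have hG_lintegral : ∫⁻ x, G x ∂μ ≠ ∞ := by
    rw [lintegral_iSup' hg_meas (ae_of_all _ hg_mono)]
    exact ne_top_of_le_ne_top ENNReal.ofReal_ne_top (iSup_le hg_lintegral)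
  have hF : Integrable (fun x ↦ f 0 x - (G x).toReal) μ :=
    (hf 0).sub (integrable_toReal_of_lintegral_ne_top hG_meas hG_lintegral)
  have hlim : ∀ᵐ x ∂μ, Tendsto (fun n ↦ f n x) atTop (𝓝 (f 0 x - (G x).toReal)) := by
    filter_upwards [ae_lt_top' hG_meas hG_lintegral] with x hx
    have hgG : Tendsto (fun n ↦ (g n x).toReal) atTop (𝓝 (G x).toReal) :=
      (ENNReal.tendsto_toReal hx.ne).comp (tendsto_atTop_iSup (hg_mono x))
    refine (tendsto_const_nhds.sub hgG).congr fun n ↦ ?_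
    rw [ENNReal.toReal_ofReal (sub_nonneg.2 (hmono x (Nat.zero_le n))), sub_sub_cancel]
  exact ⟨_, hF, ge_of_tendsto'
    (integral_tendsto_of_tendsto_of_antitone hf hF (ae_of_all _ hmono) hlim) hc, hlim⟩

lemma inv_nat_succ_mem_Ioc (n : ℕ) : ((n : ℝ) + 1)⁻¹ ∈ Ioc (0 : ℝ) 1 :=
  ⟨by positivity, inv_le_one_of_one_le₀ (by simp)⟩

theorem exists_tendsto_slope_of_integral_le {g : ℝ → X → ℝ}
    (hconv : ∀ x, ConvexOn ℝ (Icc 0 1) fun t ↦ g t x)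
    (hint : ∀ t ∈ Icc (0 : ℝ) 1, Integrable (g t) μ)
    (hmin : ∀ t ∈ Ioc (0 : ℝ) 1, ∫ x, g 0 x ∂μ ≤ ∫ x, g t x ∂μ) :
    ∃ F : X → ℝ, Integrable F μ ∧ 0 ≤ ∫ x, F x ∂μ ∧
      ∀ᵐ x ∂μ, Tendsto (fun n : ℕ ↦ slope (g · x) 0 ((n : ℝ) + 1)⁻¹) atTop (𝓝 (F x)) := by
  have hslope : ∀ t, (fun x ↦ slope (g · x) 0 t) = fun x ↦ (g t x - g 0 x) / t := fun t ↦ by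
    simp only [slope_def_field, sub_zero]
  refine exists_tendsto_of_antitone_of_le_integral (fun n ↦ ?_) (fun x m n hmn ↦ ?_) fun n ↦ ?_
  · rw [hslope]
    exact ((hint _ (Ioc_subset_Icc_self (inv_nat_succ_mem_Ioc n))).sub
      (hint 0 (left_mem_Icc.2 zero_le_one))).div_const _
  · have hmem : ∀ k : ℕ, ((k : ℝ) + 1)⁻¹ ∈ Icc (0 : ℝ) 1 \ {0} := fun k ↦
      ⟨Ioc_subset_Icc_self (inv_nat_succ_mem_Ioc k), (inv_nat_succ_mem_Ioc k).1.ne'⟩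
    exact (hconv x).slope_mono (left_mem_Icc.2 zero_le_one) (hmem n) (hmem m)
      (inv_anti₀ (by positivity) (by gcongr))
  · have ht := inv_nat_succ_mem_Ioc n
    rw [hslope, integral_div, integral_sub (hint _ (Ioc_subset_Icc_self ht))
      (hint 0 (left_mem_Icc.2 zero_le_one))]
    exact div_nonneg (sub_nonneg.2 (hmin _ ht)) ht.1.le

lemma convexOn_mul_log_lineMap {a b : ℝ} (ha : 0 ≤ a) (hb : 0 ≤ b) :
    ConvexOn ℝ (Icc 0 1) fun t : ℝ ↦ lineMap a b t * log (lineMap a b t) :=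
  (convexOn_mul_log.comp_affineMap (lineMap a b : ℝ →ᵃ[ℝ] ℝ)).subset (fun t ht ↦ by
    rw [mem_preimage, lineMap_apply_ring]
    exact add_nonneg (mul_nonneg (sub_nonneg.2 ht.2) ha) (mul_nonneg ht.1 hb)) (convex_Icc 0 1)

lemma integrable_mul_log_lineMap [IsFiniteMeasure μ] {q r : X → ℝ} (hq : Measurable q)
    (hr : Measurable r) (hq0 : 0 ≤ q) (hr0 : 0 ≤ r)
    (hqi : Integrable (fun x ↦ q x * log (q x)) μ) (hri : Integrable (fun x ↦ r x * log (r x)) μ)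
    {t : ℝ} (ht : t ∈ Icc (0 : ℝ) 1) :
    Integrable (fun x ↦ lineMap (q x) (r x) t * log (lineMap (q x) (r x) t)) μ := by
  have hu : Measurable fun x ↦ lineMap (q x) (r x) t := by
    simp only [lineMap_apply_ring]; fun_prop
  refine integrable_of_le_of_le (g₁ := fun _ ↦ -1)
    (g₂ := fun x ↦ (1 - t) * (q x * log (q x)) + t * (r x * log (r x)))
    (hu.mul hu.log).aestronglyMeasurable (ae_of_all _ fun x ↦ ?_) (ae_of_all _ fun x ↦ ?_)
    (integrable_const _) ((hqi.const_mul _).add (hri.const_mul _))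
  · have hu0 : 0 ≤ lineMap (q x) (r x) t := by
      rw [lineMap_apply_ring]
      exact add_nonneg (mul_nonneg (sub_nonneg.2 ht.2) (hq0 x)) (mul_nonneg ht.1 (hr0 x))
    linarith [self_sub_one_le_mul_log hu0]
  · simpa [lineMap_apply_ring] using convexOn_mul_log.2 (hq0 x) (hr0 x)
      (sub_nonneg.2 ht.2) ht.1 (sub_add_cancel 1 t)

lemma tendsto_slope_mul_log_lineMap {a b : ℝ} (h : a = 0 → b = 0) :
    Tendsto (slope (fun t : ℝ ↦ lineMap a b t * log (lineMap a b t)) 0) (𝓝[>] 0)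
      (𝓝 ((log a + 1) * (b - a))) := by
  rcases eq_or_ne a 0 with rfl | ha
  · simp [h rfl, slope_fun_def_field]
  have hderiv : HasDerivAt (fun t : ℝ ↦ lineMap a b t * log (lineMap a b t))
      ((log a + 1) * (b - a)) 0 := by
    have := (hasDerivAt_mul_log (x := lineMap a b (0 : ℝ)) (by simpa using ha)).comp 0
      (hasDerivAt_lineMap (a := a) (b := b) (x := (0 : ℝ)))
    simpa [Function.comp_def] using this
  exact (hasDerivAt_iff_tendsto_slope.mp hderiv).mono_left
    (nhdsWithin_mono _ fun t ht ↦ ne_of_gt ht)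

lemma tendsto_slope_mul_log_lineMap_zero {b : ℝ} (hb : 0 < b) :
    Tendsto (slope (fun t : ℝ ↦ lineMap 0 b t * log (lineMap 0 b t)) 0) (𝓝[>] 0) atBot := by
  have hlog : Tendsto (fun t ↦ b * log t + b * log b) (𝓝[>] 0) atBot :=
    tendsto_atBot_add_const_right _ _ (tendsto_log_nhdsGT_zero.const_mul_atBot hb)
  refine hlog.congr' (eventually_nhdsWithin_of_forall fun t (ht : 0 < t) ↦ ?_)
  simp only [slope_def_field, lineMap_apply_ring, mul_zero, zero_add, sub_zero, zero_mul,
    log_mul ht.ne' hb.ne']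
  field_simp

theorem ae_imp_and_integral_deriv_mul_log_nonneg [IsFiniteMeasure μ] {q r : X → ℝ}
    (hq : Measurable q) (hr : Measurable r) (hq0 : 0 ≤ q) (hr0 : 0 ≤ r)
    (hqi : Integrable (fun x ↦ q x * log (q x)) μ) (hri : Integrable (fun x ↦ r x * log (r x)) μ)
    (hmin : ∀ t ∈ Ioc (0 : ℝ) 1, ∫ x, q x * log (q x) ∂μ ≤
      ∫ x, lineMap (q x) (r x) t * log (lineMap (q x) (r x) t) ∂μ) :
    (∀ᵐ x ∂μ, q x = 0 → r x = 0) ∧ Integrable (fun x ↦ (log (q x) + 1) * (r x - q x)) μ ∧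
      0 ≤ ∫ x, (log (q x) + 1) * (r x - q x) ∂μ := by
  obtain ⟨F, hFi, hF0, hF⟩ := exists_tendsto_slope_of_integral_le
    (g := fun t x ↦ lineMap (q x) (r x) t * log (lineMap (q x) (r x) t))
    (fun x ↦ convexOn_mul_log_lineMap (hq0 x) (hr0 x))
    (fun t ht ↦ integrable_mul_log_lineMap hq hr hq0 hr0 hqi hri ht)
    (fun t ht ↦ by simpa using hmin t ht)
  have hseq : Tendsto (fun n : ℕ ↦ ((n : ℝ) + 1)⁻¹) atTop (𝓝[>] 0) :=
    tendsto_nhdsWithin_iff.2 ⟨by simpa using tendsto_one_div_add_atTop_nhds_zero_nat (𝕜 := ℝ),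
      Eventually.of_forall fun n ↦ (inv_nat_succ_mem_Ioc n).1⟩
  have hsupp : ∀ᵐ x ∂μ, q x = 0 → r x = 0 := by
    filter_upwards [hF] with x hx hqx
    by_contra hrx
    rw [hqx] at hx
    exact not_tendsto_nhds_of_tendsto_atBot
      ((tendsto_slope_mul_log_lineMap_zero ((hr0 x).lt_of_ne' hrx)).comp hseq) _ hx
  have hFeq : F =ᵐ[μ] fun x ↦ (log (q x) + 1) * (r x - q x) := by
    filter_upwards [hF, hsupp] with x hx hsx
    exact tendsto_nhds_unique hx ((tendsto_slope_mul_log_lineMap hsx).comp hseq)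
  exact ⟨hsupp, hFi.congr hFeq, (integral_congr_ae hFeq) ▸ hF0⟩

theorem ae_imp_and_integral_mul_log_le [IsFiniteMeasure μ] {q r : X → ℝ}
    (hq : Measurable q) (hr : Measurable r) (hq0 : 0 ≤ q) (hr0 : 0 ≤ r)
    (hq_int : Integrable q μ) (hr_int : Integrable r μ) (hqr : ∫ x, q x ∂μ = ∫ x, r x ∂μ)
    (hqi : Integrable (fun x ↦ q x * log (q x)) μ)
    (hri : Integrable (fun x ↦ r x * log (r x)) μ)
    (hmin : ∀ t ∈ Ioc (0 : ℝ) 1, ∫ x, q x * log (q x) ∂μ ≤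
      ∫ x, lineMap (q x) (r x) t * log (lineMap (q x) (r x) t) ∂μ) :
    (∀ᵐ x ∂μ, q x = 0 → r x = 0) ∧ Integrable (fun x ↦ r x * log (q x)) μ ∧
      ∫ x, q x * log (q x) ∂μ ≤ ∫ x, r x * log (q x) ∂μ := by
  obtain ⟨hsupp, hLi, hL0⟩ := ae_imp_and_integral_deriv_mul_log_nonneg hq hr hq0 hr0 hqi hri hmin
  have hsplit : (fun x ↦ r x * log (q x)) =
      fun x ↦ (log (q x) + 1) * (r x - q x) - (r x - q x) + q x * log (q x) := by
    ext x; ring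
  have hrq : Integrable (fun x ↦ r x - q x) μ := hr_int.sub hq_int
  have hLrq : Integrable (fun x ↦ (log (q x) + 1) * (r x - q x) - (r x - q x)) μ := hLi.sub hrq
  refine ⟨hsupp, hsplit ▸ hLrq.add hqi, ?_⟩
  rw [hsplit, integral_add hLrq hqi, integral_sub hLi hrq, integral_sub hr_int hq_int, hqr]
  linarith

lemma toReal_rnDeriv_mixture (R Q P : Measure X) [IsFiniteMeasure R] [IsFiniteMeasure Q]
    [SigmaFinite P] {t : ℝ≥0} (ht : t ≤ 1) :
    (fun x ↦ (((t : ℝ≥0∞) • R + ((1 - t : ℝ≥0) : ℝ≥0∞) • Q).rnDeriv P x).toReal) =ᵐ[P]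
      fun x ↦ lineMap (Q.rnDeriv P x).toReal (R.rnDeriv P x).toReal (t : ℝ) := by
  have : IsFiniteMeasure ((t : ℝ≥0∞) • R) := inferInstanceAs (IsFiniteMeasure (t • R))
  have : IsFiniteMeasure (((1 - t : ℝ≥0) : ℝ≥0∞) • Q) :=
    inferInstanceAs (IsFiniteMeasure ((1 - t) • Q))
  filter_upwards [Measure.rnDeriv_add ((t : ℝ≥0∞) • R) (((1 - t : ℝ≥0) : ℝ≥0∞) • Q) P,
    Measure.rnDeriv_smul_left_of_ne_top R P ENNReal.coe_ne_top,
    Measure.rnDeriv_smul_left_of_ne_top Q P ENNReal.coe_ne_top,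
    Measure.rnDeriv_lt_top R P, Measure.rnDeriv_lt_top Q P] with x hadd hR hQ hRfin hQfin
  rw [hadd, Pi.add_apply, hR, hQ, Pi.smul_apply, Pi.smul_apply, smul_eq_mul, smul_eq_mul,
    ENNReal.toReal_add (ENNReal.mul_ne_top ENNReal.coe_ne_top hRfin.ne)
      (ENNReal.mul_ne_top ENNReal.coe_ne_top hQfin.ne),
    ENNReal.toReal_mul, ENNReal.toReal_mul, ENNReal.coe_toReal, ENNReal.coe_toReal,
    NNReal.coe_sub ht, lineMap_apply_ring]
  push_cast
  ring

lemma relEnt_of_ac_of_integrable {Q P : Measure X} (hQP : Q ≪ P) (hQ : Integrable (llr Q P) Q) :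
    relEnt Q P = ENNReal.ofReal (∫ x, llr Q P x ∂Q) :=
  if_pos ⟨hQP, hQ⟩

lemma integral_llr_nonneg {Q P : Measure X} [IsProbabilityMeasure Q] [IsProbabilityMeasure P]
    (hQP : Q ≪ P) (hQ : Integrable (llr Q P) Q) : 0 ≤ ∫ x, llr Q P x ∂Q := by
  simpa using InformationTheory.integral_llr_add_sub_measure_univ_nonneg hQP hQ

lemma llr_ae_eq_llr_sub_llr {R Q P : Measure X} [SigmaFinite R] [SigmaFinite Q] [SigmaFinite P]
    (hRQ : R ≪ Q) (hQP : Q ≪ P) : llr R Q =ᵐ[R] fun x ↦ llr R P x - llr Q P x := by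
  filter_upwards [(hRQ.trans hQP).ae_le (Measure.rnDeriv_mul_rnDeriv hRQ (κ := P)),
    Measure.rnDeriv_pos hRQ, hRQ.ae_le (Measure.rnDeriv_lt_top R Q),
    hRQ.ae_le (Measure.rnDeriv_pos hQP), (hRQ.trans hQP).ae_le (Measure.rnDeriv_lt_top Q P)]
    with x hmul hRQpos hRQfin hQPpos hQPfin
  rw [llr, llr, llr, ← hmul, Pi.mul_apply, ENNReal.toReal_mul,
    log_mul (ENNReal.toReal_pos hRQpos.ne' hRQfin.ne).ne'
      (ENNReal.toReal_pos hQPpos.ne' hQPfin.ne).ne']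
  ring

theorem relEnt_add_relEnt_le_of_integral_llr_le {R Q P : Measure X} [IsProbabilityMeasure R]
    [IsProbabilityMeasure Q] [IsProbabilityMeasure P] (hRQ : R ≪ Q) (hQP : Q ≪ P)
    (hR : Integrable (llr R P) R) (hQ : Integrable (llr Q P) Q) (hQR : Integrable (llr Q P) R)
    (hle : ∫ x, llr Q P x ∂Q ≤ ∫ x, llr Q P x ∂ R) :
    relEnt R Q + relEnt Q P ≤ relEnt R P := by
  have hchain := llr_ae_eq_llr_sub_llr hRQ hQP
  have hRQi : Integrable (llr R Q) R := (hR.sub hQR).congr hchain.symm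
  rw [relEnt_of_ac_of_integrable hRQ hRQi, relEnt_of_ac_of_integrable hQP hQ,
    relEnt_of_ac_of_integrable (hRQ.trans hQP) hR,
    ← ENNReal.ofReal_add (integral_llr_nonneg hRQ hRQi) (integral_llr_nonneg hQP hQ)]
  refine ENNReal.ofReal_le_ofReal ?_
  rw [integral_congr_ae hchain, integral_sub hR hQR]
  linarith

lemma absolutelyContinuous_of_ae_rnDeriv_eq_zero_imp {R Q P : Measure X}
    [R.HaveLebesgueDecomposition P] [Q.HaveLebesgueDecomposition P] (hRP : R ≪ P) (hQP : Q ≪ P)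
    (h : ∀ᵐ x ∂P, Q.rnDeriv P x = 0 → R.rnDeriv P x = 0) : R ≪ Q := by
  refine Measure.AbsolutelyContinuous.mk fun s hs hQs ↦ ?_
  rw [← Measure.setLIntegral_rnDeriv' hQP hs,
    lintegral_eq_zero_iff (Measure.measurable_rnDeriv Q P)] at hQs
  rw [← Measure.setLIntegral_rnDeriv' hRP hs,
    lintegral_eq_zero_iff (Measure.measurable_rnDeriv R P)]
  filter_upwards [hQs, ae_restrict_of_ae h] with x hQx hx using hx hQx

lemma isProbabilityMeasure_mixture (R Q : Measure X) [IsProbabilityMeasure R]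
    [IsProbabilityMeasure Q] {t : ℝ≥0} (ht : t ≤ 1) :
    IsProbabilityMeasure ((t : ℝ≥0∞) • R + ((1 - t : ℝ≥0) : ℝ≥0∞) • Q) :=
  ⟨by simpa using add_tsub_cancel_of_le (ENNReal.coe_le_one_iff.2 ht)⟩

lemma integral_mul_log_le_of_relEnt_le_mixture {R Q P : Measure X} [IsProbabilityMeasure R]
    [IsProbabilityMeasure Q] [IsProbabilityMeasure P] (hRP : R ≪ P) (hR : Integrable (llr R P) R)
    (hQP : Q ≪ P) (hQ : Integrable (llr Q P) Q) {t : ℝ≥0} (ht : t ≤ 1)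
    (hle : relEnt Q P ≤ relEnt ((t : ℝ≥0∞) • R + ((1 - t : ℝ≥0) : ℝ≥0∞) • Q) P) :
    ∫ x, (Q.rnDeriv P x).toReal * log (Q.rnDeriv P x).toReal ∂P ≤
      ∫ x, lineMap (Q.rnDeriv P x).toReal (R.rnDeriv P x).toReal (t : ℝ) *
        log (lineMap (Q.rnDeriv P x).toReal (R.rnDeriv P x).toReal (t : ℝ)) ∂P := by
  set Qt := (t : ℝ≥0∞) • R + ((1 - t : ℝ≥0) : ℝ≥0∞) • Q
  have := isProbabilityMeasure_mixture R Q ht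
  have hQtP : Qt ≪ P := (hRP.smul_left _).add_left (hQP.smul_left _)
  have hdens : (fun x ↦ (Qt.rnDeriv P x).toReal * log (Qt.rnDeriv P x).toReal) =ᵐ[P]
      fun x ↦ lineMap (Q.rnDeriv P x).toReal (R.rnDeriv P x).toReal (t : ℝ) *
        log (lineMap (Q.rnDeriv P x).toReal (R.rnDeriv P x).toReal (t : ℝ)) :=
    (toReal_rnDeriv_mixture R Q P ht).fun_comp fun y ↦ y * log y
  have hQti : Integrable (llr Qt P) Qt := by
    refine (integrable_rnDeriv_mul_log_iff hQtP).1 (Integrable.congr ?_ hdens.symm)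
    exact integrable_mul_log_lineMap (Measure.measurable_rnDeriv Q P).ennreal_toReal
      (Measure.measurable_rnDeriv R P).ennreal_toReal (fun _ ↦ ENNReal.toReal_nonneg)
      (fun _ ↦ ENNReal.toReal_nonneg) ((integrable_rnDeriv_mul_log_iff hQP).2 hQ)
      ((integrable_rnDeriv_mul_log_iff hRP).2 hR) ⟨t.2, ht⟩
  rwa [relEnt_of_ac_of_integrable hQP hQ, relEnt_of_ac_of_integrable hQtP hQti,
    ENNReal.ofReal_le_ofReal_iff (integral_llr_nonneg hQtP hQti), ← integral_rnDeriv_mul_log hQP,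
    ← integral_rnDeriv_mul_log hQtP, integral_congr_ae hdens] at hle

theorem relEnt_add_relEnt_le_of_forall_le_mixture {R Q P : Measure X} [IsProbabilityMeasure R]
    [IsProbabilityMeasure Q] [IsProbabilityMeasure P] (hRP : R ≪ P) (hR : Integrable (llr R P) R)
    (hQP : Q ≪ P) (hQ : Integrable (llr Q P) Q)
    (hmin : ∀ t : ℝ≥0, t ≤ 1 →
      relEnt Q P ≤ relEnt ((t : ℝ≥0∞) • R + ((1 - t : ℝ≥0) : ℝ≥0∞) • Q) P) :
    relEnt R Q + relEnt Q P ≤ relEnt R P := by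
  obtain ⟨hsupp, hcross, hle⟩ := ae_imp_and_integral_mul_log_le
    (Measure.measurable_rnDeriv Q P).ennreal_toReal (Measure.measurable_rnDeriv R P).ennreal_toReal
    (fun _ ↦ ENNReal.toReal_nonneg) (fun _ ↦ ENNReal.toReal_nonneg)
    Measure.integrable_toReal_rnDeriv Measure.integrable_toReal_rnDeriv
    (by simp [Measure.integral_toReal_rnDeriv hQP, Measure.integral_toReal_rnDeriv hRP])
    ((integrable_rnDeriv_mul_log_iff hQP).2 hQ) ((integrable_rnDeriv_mul_log_iff hRP).2 hR)
    fun t ht ↦ by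
      lift t to ℝ≥0 using ht.1.le
      exact integral_mul_log_le_of_relEnt_le_mixture hRP hR hQP hQ ht.2 (hmin t ht.2)
  have hRQ : R ≪ Q := by
    refine absolutelyContinuous_of_ae_rnDeriv_eq_zero_imp hRP hQP ?_
    filter_upwards [hsupp, Measure.rnDeriv_lt_top R P] with x hx hRfin hQx
    exact ((ENNReal.toReal_eq_zero_iff _).1 (hx (by simp [hQx]))).resolve_right hRfin.ne
  refine relEnt_add_relEnt_le_of_integral_llr_le hRQ hQP hR hQ
    ((integrable_rnDeriv_smul_iff hRP).1 hcross) ?_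
  rwa [← integral_rnDeriv_mul_log hQP, ← integral_rnDeriv_smul hRP]

end

/-- **Characterization of the I-projection on a convex set** (Csiszár).
For a convex set `Γ` of probability measures and `Q ∈ Γ` with `D(Q‖P) < ∞`,
`Q` minimizes `D(·‖P)` over `Γ` iff `D(R‖P) ≥ D(R‖Q) + D(Q‖P)` for all `R ∈ Γ`. -/
theorem iProjection_characterization {X : Type*} [MeasurableSpace X]
    (P : Measure X) [IsProbabilityMeasure P]
    (Γ : Set (Measure X)) (hΓprob : ∀ R ∈ Γ, IsProbabilityMeasure R)
    (hconv : ∀ R₁ ∈ Γ, ∀ R₂ ∈ Γ, ∀ t : ℝ≥0, t ≤ 1 →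
      ((t : ℝ≥0∞) • R₁ + ((1 - t : ℝ≥0) : ℝ≥0∞) • R₂) ∈ Γ)
    (Q : Measure X) (hQΓ : Q ∈ Γ) (hQfin : relEnt Q P < ⊤) :
    (∀ R ∈ Γ, relEnt Q P ≤ relEnt R P) ↔ (∀ R ∈ Γ, relEnt R Q + relEnt Q P ≤ relEnt R P) := by
  refine ⟨fun hmin R hR ↦ ?_, fun h R hR ↦ le_add_self.trans (h R hR)⟩
  have := hΓprob Q hQΓ
  have := hΓprob R hR
  obtain ⟨hQP, hQ⟩ : Q ≪ P ∧ Integrable (llr Q P) Q := by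
    by_contra h
    simp [relEnt, h] at hQfin
  by_cases hRfin : R ≪ P ∧ Integrable (llr R P) R
  · exact relEnt_add_relEnt_le_of_forall_le_mixture hRfin.1 hRfin.2 hQP hQ
      fun t ht ↦ hmin _ (hconv R hR Q hQΓ t ht)
  · simp [relEnt, hRfin]
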